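/- Let e1, e2 ∈ ℝ^d, k ∈ {1,…,d} with k < d, and ε > 0. If an index i ∈ TopFeatures(e1;k) satisfies i ∉ TopFeatures(e2;k) or sign(e1_i) ≠ sign(e2_i), then the corresponding hinge term of the sign-agreement surrogate loss satisfies max(0, ψ_sign(e2) − sign(e1_i)·e2_i + ε) ≥ ε. Consequently, ℓ_Sgn(e2; e1, k) ≥ (ε/k) · |{i ∈ TopFeatures(e1;k) : i ∉ TopFeatures(e2;k) or sign(e1_i) ≠ sign(e2_i)}|. -/
import Mathlib


open Finset

/-- `rnk x i` is the rank (1-indexed) of `|x i|` among `|x 1|,…,|x d|` in descending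
order, ties broken by index: it is the unique bijection `[d] → [d]` with
`rnk x i < rnk x j` iff `|x i| > |x j|`, or `|x i| = |x j|` and `i < j`. -/
noncomputable def rnk {d : ℕ} (x : Fin d → ℝ) (i : Fin d) : ℕ :=
  (Finset.univ.filter (fun j => |x i| < |x j| ∨ (|x j| = |x i| ∧ j ≤ i))).card

/-- `TopFeatures(x;k)`: indices whose rank is at most `k`. -/
noncomputable def topFeat {d : ℕ} (x : Fin d → ℝ) (k : ℕ) : Finset (Fin d) :=
  Finset.univ.filter (fun i => rnk x i ≤ k)

/-- `sign(t) = 1` if `t ≥ 0`, else `-1`. -/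
noncomputable def sgn (t : ℝ) : ℝ := if 0 ≤ t then 1 else -1

/-- Top-`k` feature agreement. -/
noncomputable def featAgree {d : ℕ} (e1 e2 : Fin d → ℝ) (k : ℕ) : ℝ :=
  ((topFeat e1 k ∩ topFeat e2 k).card : ℝ) / k

/-- Top-`k` rank agreement. -/
noncomputable def rankAgree {d : ℕ} (e1 e2 : Fin d → ℝ) (k : ℕ) : ℝ :=
  (((topFeat e1 k ∩ topFeat e2 k).filter (fun i => rnk e1 i = rnk e2 i)).card : ℝ) / k

/-- Top-`k` sign agreement. -/
noncomputable def signAgree {d : ℕ} (e1 e2 : Fin d → ℝ) (k : ℕ) : ℝ :=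
  (((topFeat e1 k ∩ topFeat e2 k).filter (fun i => sgn (e1 i) = sgn (e2 i))).card : ℝ) / k

/-- Top-`k` signed-rank agreement. -/
noncomputable def signedRankAgree {d : ℕ} (e1 e2 : Fin d → ℝ) (k : ℕ) : ℝ :=
  (((topFeat e1 k ∩ topFeat e2 k).filter
      (fun i => sgn (e1 i) = sgn (e2 i) ∧ rnk e1 i = rnk e2 i)).card : ℝ) / k

/-- `ψ_feat(e2)`: max of `|e2 i|` over `i ∉ TopFeatures(e1;k)` when `k < d`, else `-ε`. -/
noncomputable def psiFeat {d : ℕ} (e1 e2 : Fin d → ℝ) (k : ℕ) (ε : ℝ) : ℝ :=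
  if k < d then sSup ((fun i => |e2 i|) '' {i : Fin d | i ∉ topFeat e1 k}) else -ε

/-- Feature-agreement surrogate loss `ℓ_Ftr(e2; e1, k)`. -/
noncomputable def lossFtr {d : ℕ} (e2 e1 : Fin d → ℝ) (k : ℕ) (ε : ℝ) : ℝ :=
  (∑ i ∈ topFeat e1 k, max 0 (psiFeat e1 e2 k ε - |e2 i| + ε)) / k

/-- `sortD a j` is the `j`-th largest entry of `a` (for `1 ≤ j ≤ d`). -/
noncomputable def sortD {d : ℕ} (a : Fin d → ℝ) (j : ℕ) : ℝ :=
  if h : d - j < d then (a ∘ Tuple.sort a) ⟨d - j, h⟩ else 0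

/-- Rank-agreement surrogate loss `ℓ_Rnk(e2; e1, k)`: the sum over
`I = {(j,i) : j ∈ [k], rank(e1,i) = j}` is realized as the sum over
`i ∈ TopFeatures(e1;k)` with `j = rnk e1 i`. -/
noncomputable def lossRnk {d : ℕ} (e2 e1 : Fin d → ℝ) (k : ℕ) (ε : ℝ) : ℝ :=
  (∑ i ∈ topFeat e1 k,
    max 0 (sortD (Function.update (fun t => |e2 t|) i (-ε)) (rnk e1 i) - |e2 i| + ε)) / k

/-- `ψ_sign(e2)`: max of `|e2 i|` over `i ∉ TopFeatures(e1;k)` when `k < d`, else `0`. -/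
noncomputable def psiSign {d : ℕ} (e1 e2 : Fin d → ℝ) (k : ℕ) : ℝ :=
  if k < d then sSup ((fun i => |e2 i|) '' {i : Fin d | i ∉ topFeat e1 k}) else 0

/-- Sign-agreement surrogate loss `ℓ_Sgn(e2; e1, k)`. -/
noncomputable def lossSgn {d : ℕ} (e2 e1 : Fin d → ℝ) (k : ℕ) (ε : ℝ) : ℝ :=
  (∑ i ∈ topFeat e1 k, max 0 (psiSign e1 e2 k - sgn (e1 i) * e2 i + ε)) / k

/-- Signed-rank-agreement surrogate loss `ℓ_SgnRnk(e2; e1, k)`. -/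
noncomputable def lossSgnRnk {d : ℕ} (e2 e1 : Fin d → ℝ) (k : ℕ) (ε : ℝ) : ℝ :=
  (∑ i ∈ topFeat e1 k,
    max 0 (sortD (Function.update (fun t => |e2 t|) i 0) (rnk e1 i) - sgn (e1 i) * e2 i + ε)) / k

lemma rnk_lt_rnk {d : ℕ} (x : Fin d → ℝ) {i j : Fin d}
    (h : |x i| < |x j| ∨ (|x j| = |x i| ∧ j < i)) : rnk x j < rnk x i := by
  unfold rnk
  apply Finset.card_lt_card
  rw [Finset.ssubset_def]
  constructor
  · intro t ht
    simp only [Finset.mem_filter, Finset.mem_univ, true_and] at ht ⊢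
    rcases ht with h1 | ⟨h1, h2⟩ <;> rcases h with h3 | ⟨h3, h4⟩
    · left; linarith
    · left; linarith
    · left; linarith
    · right; exact ⟨by linarith, le_trans h2 h4.le⟩
  · intro hsub
    have hi : i ∈ Finset.univ.filter
        (fun t => |x i| < |x t| ∨ (|x t| = |x i| ∧ t ≤ i)) := by
      simp
    have := hsub hi
    simp only [Finset.mem_filter, Finset.mem_univ, true_and] at this
    rcases this with h1 | ⟨h1, h2⟩ <;> rcases h with h3 | ⟨h3, h4⟩
    · linarith
    · linarith
    · linarith
    · exact absurd h2 (not_le.mpr h4)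

lemma rnk_injective {d : ℕ} (x : Fin d → ℝ) : Function.Injective (rnk x) := by
  intro i j hij
  by_contra hne
  rcases lt_trichotomy (|x i|) (|x j|) with h | h | h
  · exact absurd hij (rnk_lt_rnk x (Or.inl h)).ne'
  · rcases lt_or_gt_of_ne (fun he : i = j => hne he) with hlt | hlt
    · exact absurd hij (rnk_lt_rnk x (Or.inr ⟨h, hlt⟩)).ne
    · exact absurd hij (rnk_lt_rnk x (Or.inr ⟨h.symm, hlt⟩)).ne'
  · exact absurd hij (rnk_lt_rnk x (Or.inl h)).ne

lemma rnk_mem_Icc {d : ℕ} (x : Fin d → ℝ) (i : Fin d) : rnk x i ∈ Finset.Icc 1 d := by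
  rw [Finset.mem_Icc]
  constructor
  · rw [rnk, Nat.one_le_iff_ne_zero, ← Nat.pos_iff_ne_zero, Finset.card_pos]
    exact ⟨i, by simp⟩
  · calc rnk x i ≤ (Finset.univ : Finset (Fin d)).card :=
        Finset.card_le_card (Finset.filter_subset _ _)
    _ = d := by simp

lemma image_rnk {d : ℕ} (x : Fin d → ℝ) :
    Finset.univ.image (rnk x) = Finset.Icc 1 d := by
  apply Finset.eq_of_subset_of_card_le
  · intro m hm
    simp only [Finset.mem_image, Finset.mem_univ, true_and] at hm
    obtain ⟨i, rfl⟩ := hm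
    exact rnk_mem_Icc x i
  · rw [Nat.card_Icc, Finset.card_image_of_injective _ (rnk_injective x)]
    simp

lemma card_topFeat {d : ℕ} (x : Fin d → ℝ) {k : ℕ} (hk : k ≤ d) :
    (topFeat x k).card = k := by
  have himg : (topFeat x k).image (rnk x) = Finset.Icc 1 k := by
    ext m
    simp only [topFeat, Finset.mem_image, Finset.mem_filter, Finset.mem_univ, true_and,
      Finset.mem_Icc]
    constructor
    · rintro ⟨i, hi, rfl⟩
      have := rnk_mem_Icc x i
      rw [Finset.mem_Icc] at this
      omega
    · intro hm
      have hmm : m ∈ Finset.univ.image (rnk x) := by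
        rw [image_rnk, Finset.mem_Icc]; omega
      simp only [Finset.mem_image, Finset.mem_univ, true_and] at hmm
      obtain ⟨i, rfl⟩ := hmm
      exact ⟨i, hm.2, rfl⟩
  have := Finset.card_image_of_injective (topFeat x k) (rnk_injective x)
  rw [himg, Nat.card_Icc] at this
  omega

lemma exists_notMem_topFeat {d : ℕ} (x : Fin d → ℝ) {k : ℕ} (hkd : k < d) :
    ∃ j, j ∉ topFeat x k := by
  by_contra h
  push_neg at h
  have : (Finset.univ : Finset (Fin d)).card ≤ (topFeat x k).card :=
    Finset.card_le_card (fun j _ => h j)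
  rw [card_topFeat x hkd.le] at this
  simp at this
  omega

lemma psiSign_ge {d : ℕ} (e1 e2 : Fin d → ℝ) {k : ℕ} (hkd : k < d) {j : Fin d}
    (hj : j ∉ topFeat e1 k) : |e2 j| ≤ psiSign e1 e2 k := by
  rw [psiSign, if_pos hkd]
  exact le_csSup ((Set.toFinite _).image _).bddAbove ⟨j, hj, rfl⟩

lemma sgn_mul_le_abs (a t : ℝ) : sgn a * t ≤ |t| := by
  unfold sgn
  split
  · simpa using le_abs_self t
  · simpa using neg_le_abs t

lemma sgn_ne_mul_nonpos {a b : ℝ} (h : sgn a ≠ sgn b) : sgn a * b ≤ 0 := by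
  unfold sgn at *
  split_ifs at * <;> simp_all <;> linarith

/-- For `k < d`, every index `i ∈ TopFeatures(e1;k)` with `i ∉ TopFeatures(e2;k)` or
`sign(e1_i) ≠ sign(e2_i)` contributes a hinge term of at least `ε` to the
sign-agreement surrogate loss; consequently `ℓ_Sgn(e2;e1,k)` is at least `ε/k` times
the number of such indices. -/
theorem lossSgn_hinge_ge {d : ℕ} (e1 e2 : Fin d → ℝ) (k : ℕ)
    (hk : 1 ≤ k) (hkd : k < d) (ε : ℝ) (hε : 0 < ε) :
    (∀ i ∈ topFeat e1 k, (i ∉ topFeat e2 k ∨ sgn (e1 i) ≠ sgn (e2 i)) →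
        ε ≤ max 0 (psiSign e1 e2 k - sgn (e1 i) * e2 i + ε)) ∧
      ε / k * (((topFeat e1 k).filter
          (fun i => i ∉ topFeat e2 k ∨ sgn (e1 i) ≠ sgn (e2 i))).card : ℝ)
        ≤ lossSgn e2 e1 k ε := by
  have H : ∀ i ∈ topFeat e1 k, (i ∉ topFeat e2 k ∨ sgn (e1 i) ≠ sgn (e2 i)) →
      ε ≤ max 0 (psiSign e1 e2 k - sgn (e1 i) * e2 i + ε) := by
    intro i hi hbad
    have h0 : 0 ≤ psiSign e1 e2 k - sgn (e1 i) * e2 i := by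
      rcases hbad with hni | hs
      · -- find j ∈ topFeat e2 k \ topFeat e1 k
        have hex : ∃ j, j ∈ topFeat e2 k ∧ j ∉ topFeat e1 k := by
          by_contra h
          push_neg at h
          have hsub2 : topFeat e2 k ⊆ (topFeat e1 k).erase i := fun j hj =>
            Finset.mem_erase.mpr ⟨fun he => hni (he ▸ hj), h j hj⟩
          have hc := Finset.card_le_card hsub2
          rw [Finset.card_erase_of_mem hi, card_topFeat e1 hkd.le,
            card_topFeat e2 hkd.le] at hc
          omega
        obtain ⟨j, hj2, hj1⟩ := hex
        have h1 : |e2 i| ≤ |e2 j| := by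
          by_contra hlt
          push_neg at hlt
          have := rnk_lt_rnk e2 (Or.inl hlt)
          rw [topFeat, Finset.mem_filter] at hj2 hni
          simp only [Finset.mem_univ, true_and, not_le] at hj2 hni
          omega
        have h2 : |e2 j| ≤ psiSign e1 e2 k := psiSign_ge e1 e2 hkd hj1
        have h3 : sgn (e1 i) * e2 i ≤ |e2 i| := sgn_mul_le_abs _ _
        linarith
      · obtain ⟨j, hj⟩ := exists_notMem_topFeat e1 hkd
        have h2 := psiSign_ge e1 e2 hkd hj
        have h3 : sgn (e1 i) * e2 i ≤ 0 := sgn_ne_mul_nonpos hs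
        have h4 : (0 : ℝ) ≤ |e2 j| := abs_nonneg _
        linarith
    calc ε ≤ psiSign e1 e2 k - sgn (e1 i) * e2 i + ε := by linarith
    _ ≤ max 0 (psiSign e1 e2 k - sgn (e1 i) * e2 i + ε) := le_max_right _ _
  refine ⟨H, ?_⟩
  set F := (topFeat e1 k).filter
    (fun i => i ∉ topFeat e2 k ∨ sgn (e1 i) ≠ sgn (e2 i)) with hF
  have hsum1 : (F.card : ℝ) * ε ≤ ∑ i ∈ F, max 0 (psiSign e1 e2 k - sgn (e1 i) * e2 i + ε) := by
    calc (F.card : ℝ) * ε = ∑ _i ∈ F, ε := by rw [Finset.sum_const, nsmul_eq_mul]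
    _ ≤ _ := Finset.sum_le_sum (fun i hi => H i (Finset.mem_filter.mp hi).1
        (Finset.mem_filter.mp hi).2)
  have hsum2 : ∑ i ∈ F, max 0 (psiSign e1 e2 k - sgn (e1 i) * e2 i + ε)
      ≤ ∑ i ∈ topFeat e1 k, max 0 (psiSign e1 e2 k - sgn (e1 i) * e2 i + ε) :=
    Finset.sum_le_sum_of_subset_of_nonneg (Finset.filter_subset _ _)
      (fun i _ _ => le_max_left _ _)
  rw [lossSgn, div_mul_eq_mul_div]
  apply div_le_div_of_nonneg_right ?_ (by positivity)
  calc ε * (F.card : ℝ) = (F.card : ℝ) * ε := mul_comm _ _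
  _ ≤ _ := le_trans hsum1 hsum2
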